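/- arXiv:0708.3105 — 2 statements merged into one kernel-verified Lean document; each statement's English description precedes it below -/
import Mathlib

section
/- Let k be a field and let I be a nonzero monomial ideal in the polynomial ring k[x_1,…,x_n]. Then I_> is a monomial ideal; equivalently, a polynomial f lies in I_> if and only if every monomial occurring in f lies in I_>. -/
open Filter Polynomial

/-- An element `b` is weakly subintegral over a subset (subring) `R` of `B`:
there are `q ≥ 0` and `a_i ∈ R` (`1 ≤ i ≤ 2q+1`) with
`b^n + ∑_{i=1}^n (n choose i) a_i b^{n-i} = 0` for `q+1 ≤ n ≤ 2q+1`. -/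
def WSubOver {B : Type*} [CommRing B] (R : Set B) (b : B) : Prop :=
  ∃ q : ℕ, ∃ a : ℕ → B, (∀ i, a i ∈ R) ∧
    ∀ n, q + 1 ≤ n → n ≤ 2 * q + 1 →
      b ^ n + ∑ i ∈ Finset.Icc 1 n, (n.choose i : B) * a i * b ^ (n - i) = 0

/-- An element `b` is weakly subintegral over an ideal `I`:
there are `q ≥ 0` and `a_i ∈ I^i` with
`b^n + ∑_{i=1}^n (n choose i) a_i b^{n-i} = 0` for `q+1 ≤ n ≤ 2q+1`.
The set of such elements is the weak subintegral closure `*I`. -/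
def WSubIdeal {A : Type*} [CommRing A] (I : Ideal A) (b : A) : Prop :=
  ∃ q : ℕ, ∃ a : ℕ → A, (∀ i, a i ∈ I ^ i) ∧
    ∀ n, q + 1 ≤ n → n ≤ 2 * q + 1 →
      b ^ n + ∑ i ∈ Finset.Icc 1 n, (n.choose i : A) * a i * b ^ (n - i) = 0

/-- `a` is integral over the ideal `I`: `a^n + c_1 a^{n-1} + ⋯ + c_n = 0` with `c_i ∈ I^i`.
The set of such elements is the integral closure `Ī` of `I`. -/
def IntegralOverIdeal {A : Type*} [CommRing A] (I : Ideal A) (a : A) : Prop :=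
  ∃ n : ℕ, 0 < n ∧ ∃ c : ℕ → A, (∀ i, c i ∈ I ^ i) ∧
    a ^ n + ∑ i ∈ Finset.Icc 1 n, c i * a ^ (n - i) = 0

/-- `J` is a reduction of `I`: `J ⊆ I` and `J̄ = Ī`. -/
def IsReduction {A : Type*} [CommRing A] (J I : Ideal A) : Prop :=
  J ≤ I ∧ ∀ x, IntegralOverIdeal J x ↔ IntegralOverIdeal I x

/-- `J` is a minimal reduction of `I`. -/
def IsMinimalReduction {A : Type*} [CommRing A] (J I : Ideal A) : Prop :=
  IsReduction J I ∧ ∀ J' : Ideal A, IsReduction J' I → J' ≤ J → J' = J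

/-- `ord_I(a) = max {n | a ∈ I^n}` (with value `∞` if `a ∈ ⋂ I^n`). -/
noncomputable def ordI {A : Type*} [CommRing A] (I : Ideal A) (a : A) : ℕ∞ :=
  ⨆ (n : ℕ) (_ : a ∈ I ^ n), (n : ℕ∞)

/-- The sequence `ord_I(a^n)/n`, whose limit is the asymptotic Samuel function `v̄_I(a)`. -/
noncomputable def samuelSeq {A : Type*} [CommRing A] (I : Ideal A) (a : A) (n : ℕ) : ENNReal :=
  (ordI I (a ^ n) : ENNReal) / (n : ENNReal)

/-- `a ∈ I_>`, i.e. `v̄_I(a) > 1`, where `v̄_I(a)` is the limit of `ord_I(a^n)/n`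
(this limit always exists in `[0,∞]`). -/
def MemIgt {A : Type*} [CommRing A] (I : Ideal A) (a : A) : Prop :=
  ∃ L : ENNReal, 1 < L ∧ Filter.Tendsto (samuelSeq I a) Filter.atTop (nhds L)

/-!
Writing `I_>` as `{a | a ^ m ∈ I ^ (m + 1) for some m ≥ 1}` (Fekete's lemma for the
superadditive sequence `ord_I(a^n)` shows that the limit defining `v̄_I(a)` exists and is the
supremum of `ord_I(a^n)/n`), the binomial expansion shows this set is an ideal. For a monomial
ideal `I`, so is every `I^k`, and the leading term of `f^m` for a monomial order is the `m`-th
power of the leading term of `f`; hence `f ∈ I_>` forces its leading term into `I_>`, and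
peeling off leading terms puts every term of `f` in `I_>`.
-/

open scoped ENNReal Topology

section Superadditive

variable {u : ℕ → ℝ≥0∞}

theorem monotone_of_superadditive (hu : ∀ p q, u p + u q ≤ u (p + q)) : Monotone u := by
  intro p q hpq
  obtain ⟨r, rfl⟩ := Nat.exists_eq_add_of_le hpq
  exact le_self_add.trans (hu p r)

theorem natCast_mul_le_of_superadditive (hu : ∀ p q, u p + u q ≤ u (p + q)) (k n : ℕ) :
    k * u n ≤ u (n * k) := by
  induction k with
  | zero => simp
  | succ k ih =>
    calc ((k + 1 : ℕ) : ℝ≥0∞) * u n = k * u n + u n := by push_cast; ring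
      _ ≤ u (n * k) + u n := by gcongr
      _ ≤ u (n * (k + 1)) := hu _ _

theorem eventually_lt_div_of_superadditive (hu : ∀ p q, u p + u q ≤ u (p + q)) {l : ℝ≥0∞}
    {M : ℕ} (hM : M ≠ 0) (hl : l < u M / M) : ∀ᶠ n in atTop, l < u n / n := by
  refine .atTop_of_arithmetic hM fun r hr => ?_
  have hlim : Tendsto (fun k : ℕ => ((k / (k + 1) : NNReal) : ℝ≥0∞) * (u M / M)) atTop
      (𝓝 (u M / M)) := by
    simpa using ENNReal.Tendsto.mul_const
      (ENNReal.tendsto_coe.2 (tendsto_natCast_div_add_atTop (1 : NNReal))) (Or.inl one_ne_zero)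
  have hbound (k : ℕ) :
      ((k / (k + 1) : NNReal) : ℝ≥0∞) * (u M / M) ≤ u (M * k + r) / (M * k + r : ℕ) := by
    rcases k.eq_zero_or_pos with rfl | hk
    · simp
    have hMk : ((M * k + r : ℕ) : ℝ≥0∞) ≠ 0 := by positivity
    rw [ENNReal.le_div_iff_mul_le (Or.inl hMk) (Or.inl (ENNReal.natCast_ne_top _))]
    calc ((k / (k + 1) : NNReal) : ℝ≥0∞) * (u M / M) * (M * k + r : ℕ)
        ≤ ((k / (k + 1) : NNReal) : ℝ≥0∞) * (u M / M) * (M * (k + 1) : ℕ) := by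
          gcongr; rw [Nat.mul_succ]; omega
      _ = (k / (k + 1) * (k + 1) : ℝ≥0∞) * (u M / M * M) := by
          rw [ENNReal.coe_div (by positivity)]; push_cast; ring
      _ = k * u M := by
          rw [ENNReal.div_mul_cancel (by positivity) (by simp),
            ENNReal.div_mul_cancel (by exact_mod_cast hM) (by simp)]
      _ ≤ u (M * k + r) :=
          (natCast_mul_le_of_superadditive hu k M).trans
            (monotone_of_superadditive hu le_self_add)
  filter_upwards [hlim.eventually (lt_mem_nhds hl)] with k hk using hk.trans_le (hbound k)

theorem tendsto_div_iSup_of_superadditive (hu : ∀ p q, u p + u q ≤ u (p + q)) :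
    Tendsto (fun n => u n / n) atTop (𝓝 (⨆ (n : ℕ) (_ : n ≠ 0), u n / n)) := by
  refine tendsto_order.2 ⟨fun l hl => ?_, fun l hl => ?_⟩
  · simp only [lt_iSup_iff] at hl
    obtain ⟨M, hM, hlM⟩ := hl
    exact eventually_lt_div_of_superadditive hu hM hlM
  · filter_upwards [eventually_ne_atTop 0] with n hn
    exact (le_iSup₂ (f := fun (n : ℕ) (_ : n ≠ 0) => u n / n) n hn).trans_lt hl

end Superadditive

section IgtIdeal

variable {A : Type*} [CommRing A] {I : Ideal A} {f g : A} {m : ℕ}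

theorem pow_mem_pow_mul_div (hf : f ^ m ∈ I ^ (m + 1)) (i : ℕ) :
    f ^ i ∈ I ^ ((m + 1) * (i / m)) := by
  have hsplit : f ^ i = (f ^ m) ^ (i / m) * f ^ (i % m) := by
    rw [← pow_mul, ← pow_add, Nat.div_add_mod]
  rw [hsplit, pow_mul]
  exact Ideal.mul_mem_right _ _ (Ideal.pow_mem_pow hf _)

theorem pow_mul_mem_pow_mul_add_one (hf : f ^ m ∈ I ^ (m + 1)) {k : ℕ} (hk : k ≠ 0) :
    f ^ (m * k) ∈ I ^ (m * k + 1) := by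
  rw [pow_mul]
  refine Ideal.pow_le_pow_right ?_ (pow_mul I _ _ ▸ Ideal.pow_mem_pow hf k)
  rw [add_mul, one_mul]
  omega

theorem add_pow_mem_pow (hm : m ≠ 0) (hf : f ^ m ∈ I ^ (m + 1)) (hg : g ^ m ∈ I ^ (m + 1)) :
    (f + g) ^ (m * (m + 2)) ∈ I ^ (m * (m + 2) + 1) := by
  rw [add_pow]
  refine Ideal.sum_mem _ fun i hi => Ideal.mul_mem_right _ _ ?_
  have hdiv : m + 1 ≤ i / m + (m * (m + 2) - i) / m := by
    have hsum := Nat.add_div (a := i) (b := m * (m + 2) - i) (Nat.pos_of_ne_zero hm)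
    rw [Nat.add_sub_cancel' (by simpa [Nat.lt_succ_iff] using hi),
      Nat.mul_div_cancel_left _ (Nat.pos_of_ne_zero hm)] at hsum
    split_ifs at hsum <;> omega
  refine Ideal.pow_le_pow_right ?_ (pow_add I _ _ ▸ Ideal.mul_mem_mul
    (pow_mem_pow_mul_div hf i) (pow_mem_pow_mul_div hg (m * (m + 2) - i)))
  nlinarith

variable (I) in
/-- The ideal `I_>`, described without the asymptotic Samuel function
(see `memIgt_iff_mem_igtIdeal`). -/
def igtIdeal : Ideal A where
  carrier := {a | ∃ m, m ≠ 0 ∧ a ^ m ∈ I ^ (m + 1)}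
  zero_mem' := ⟨1, one_ne_zero, by simp⟩
  add_mem' := by
    rintro f g ⟨p, hp, hf⟩ ⟨q, hq, hg⟩
    have hf' := pow_mul_mem_pow_mul_add_one hf hq
    have hg' := mul_comm p q ▸ pow_mul_mem_pow_mul_add_one hg hp
    exact ⟨_, by positivity, add_pow_mem_pow (mul_ne_zero hp hq) hf' hg'⟩
  smul_mem' := by
    rintro c f ⟨m, hm, hf⟩
    exact ⟨m, hm, by rw [smul_eq_mul, mul_pow]; exact Ideal.mul_mem_left _ _ hf⟩

end IgtIdeal

section Samuel

variable {A : Type*} [CommRing A] (I : Ideal A)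

theorem natCast_le_ordI_iff {x : A} {k : ℕ} : (k : ℕ∞) ≤ ordI I x ↔ x ∈ I ^ k := by
  refine ⟨fun h => ?_, fun h => le_iSup₂ (f := fun (n : ℕ) (_ : x ∈ I ^ n) => (n : ℕ∞)) k h⟩
  by_contra hx
  have hk : k ≠ 0 := by rintro rfl; simp at hx
  have : ordI I x ≤ (k - 1 : ℕ) := iSup₂_le fun n hn => Nat.cast_le.2 <| by
    by_contra! hkn
    exact hx (Ideal.pow_le_pow_right (by omega) hn)
  have := h.trans this
  norm_cast at this
  omega

theorem ordI_add_ordI_le_ordI_mul (x y : A) : ordI I x + ordI I y ≤ ordI I (x * y) :=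
  ENat.biSup_add_biSup_le' ⟨0, by simp⟩ ⟨0, by simp⟩ fun i hi j hj => by
    exact_mod_cast (natCast_le_ordI_iff I).2 (pow_add I i j ▸ Ideal.mul_mem_mul hi hj)

theorem one_lt_samuelSeq_iff {a : A} {n : ℕ} (hn : n ≠ 0) :
    1 < samuelSeq I a n ↔ a ^ n ∈ I ^ (n + 1) := by
  rw [samuelSeq, ENNReal.lt_div_iff_mul_lt (Or.inl (by exact_mod_cast hn)) (Or.inl (by simp)),
    one_mul, ← natCast_le_ordI_iff, Nat.cast_add_one, ENat.add_one_le_iff (ENat.natCast_ne_top n),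
    ← ENat.toENNReal_lt, ENat.toENNReal_coe]

theorem tendsto_samuelSeq (a : A) :
    Tendsto (samuelSeq I a) atTop (𝓝 (⨆ (n : ℕ) (_ : n ≠ 0), samuelSeq I a n)) :=
  tendsto_div_iSup_of_superadditive fun p q => by
    rw [pow_add, ← ENat.toENNReal_add, ENat.toENNReal_le]
    exact ordI_add_ordI_le_ordI_mul I _ _

theorem memIgt_iff_mem_igtIdeal {a : A} : MemIgt I a ↔ a ∈ igtIdeal I := by
  constructor
  · rintro ⟨L, hL, hlim⟩
    obtain ⟨m, hm, hlt⟩ := ((eventually_ne_atTop 0).and (hlim.eventually (lt_mem_nhds hL))).exists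
    exact ⟨m, hm, (one_lt_samuelSeq_iff I hm).1 hlt⟩
  · rintro ⟨m, hm, hmem⟩
    refine ⟨_, ?_, tendsto_samuelSeq I a⟩
    exact ((one_lt_samuelSeq_iff I hm).2 hmem).trans_le
      (le_iSup₂ (f := fun (n : ℕ) (_ : n ≠ 0) => samuelSeq I a n) m hm)

end Samuel

namespace MvPolynomial

variable {σ R : Type*}

section CommSemiring

variable [CommSemiring R]

def IsMonomialIdeal (J : Ideal (MvPolynomial σ R)) : Prop :=
  ∀ f ∈ J, ∀ d ∈ f.support, monomial d (1 : R) ∈ J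

theorem isMonomialIdeal_span_monomial (S : Set (σ →₀ ℕ)) :
    IsMonomialIdeal (Ideal.span ((fun d => monomial d (1 : R)) '' S)) := by
  intro f hf d hd
  rw [mem_ideal_span_monomial_image] at hf ⊢
  intro e he
  rw [Finset.mem_singleton.1 (support_monomial_subset he)]
  exact hf d hd

namespace IsMonomialIdeal

variable {J K : Ideal (MvPolynomial σ R)}

theorem mul (hJ : IsMonomialIdeal J) (hK : IsMonomialIdeal K) : IsMonomialIdeal (J * K) := by
  classical
  intro f hf
  refine Submodule.mul_induction_on hf (fun x hx y hy d hd => ?_) (fun x y hx hy d hd => ?_)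
  · obtain ⟨a, ha, b, hb, rfl⟩ := Finset.mem_add.1 (support_mul x y hd)
    rw [← mul_one (1 : R), ← monomial_mul]
    exact Ideal.mul_mem_mul (hJ x hx a ha) (hK y hy b hb)
  · rcases Finset.mem_union.1 (support_add hd) with hd | hd
    exacts [hx d hd, hy d hd]

theorem pow (hJ : IsMonomialIdeal J) (k : ℕ) : IsMonomialIdeal (J ^ k) := by
  induction k with
  | zero => intro _ _ _ _; simp
  | succ k ih => rw [pow_succ]; exact ih.mul hJ

theorem monomial_coeff_mem (hJ : IsMonomialIdeal J) {f : MvPolynomial σ R} (hf : f ∈ J)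
    (d : σ →₀ ℕ) : monomial d (f.coeff d) ∈ J := by
  by_cases hd : d ∈ f.support
  · rw [← mul_one (f.coeff d), ← smul_eq_mul, ← smul_monomial]
    exact Submodule.smul_of_tower_mem _ _ (hJ f hf d hd)
  · simp [notMem_support_iff.1 hd]

theorem mem_iff (hJ : IsMonomialIdeal J) {f : MvPolynomial σ R} :
    f ∈ J ↔ ∀ d ∈ f.support, monomial d (f.coeff d) ∈ J :=
  ⟨fun hf d _ => hJ.monomial_coeff_mem hf d, fun h => f.as_sum ▸ J.sum_mem h⟩

theorem eq_span (hJ : IsMonomialIdeal J) :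
    J = Ideal.span ((fun d => monomial d (1 : R)) '' {d | monomial d (1 : R) ∈ J}) := by
  refine le_antisymm (fun f hf => ?_) (Ideal.span_le.2 <| Set.image_subset_iff.2 fun _ h => h)
  rw [f.as_sum]
  refine Ideal.sum_mem _ fun d hd => ?_
  rw [← mul_one (f.coeff d), ← C_mul_monomial]
  exact Ideal.mul_mem_left _ _ (Ideal.subset_span ⟨d, hJ f hf d hd, rfl⟩)

end IsMonomialIdeal

end CommSemiring

variable [CommRing R] {J I : Ideal (MvPolynomial σ R)}

theorem monomial_coeff_mem_of_forall_leadingTerm_mem (m : MonomialOrder σ)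
    (hJ : ∀ f ∈ J, m.leadingTerm f ∈ J) {f : MvPolynomial σ R} (hf : f ∈ J) (d : σ →₀ ℕ) :
    monomial d (f.coeff d) ∈ J := by
  classical
  induction hcard : f.support.card using Nat.strong_induction_on generalizing f with
  | _ n ih =>
    by_cases hd : d = m.degree f
    · subst hd; exact hJ f hf
    rcases eq_or_ne f 0 with rfl | hf0
    · simp
    set g := f - m.leadingTerm f
    have hcoeff (e : σ →₀ ℕ) (he : e ≠ m.degree f) : g.coeff e = f.coeff e := by
      simp [g, MonomialOrder.leadingTerm, MvPolynomial.coeff_monomial, Ne.symm he]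
    have hsupp : g.support ⊂ f.support := by
      refine Finset.ssubset_iff_of_subset (fun e he => ?_) |>.2
        ⟨m.degree f, m.degree_mem_support hf0, by
          simp [g, MonomialOrder.leadingTerm, MonomialOrder.leadingCoeff]⟩
      rcases eq_or_ne e (m.degree f) with rfl | hne
      · exact m.degree_mem_support hf0
      · rw [mem_support_iff, ← hcoeff e hne]; exact mem_support_iff.1 he
    rw [← hcoeff d hd]
    exact ih _ (hcard ▸ Finset.card_lt_card hsupp) (J.sub_mem hf (hJ f hf)) rfl

theorem _root_.MonomialOrder.leadingTerm_pow [IsReduced R] (m : MonomialOrder σ)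
    (f : MvPolynomial σ R) (k : ℕ) : m.leadingTerm (f ^ k) = m.leadingTerm f ^ k := by
  rw [MonomialOrder.leadingTerm, MonomialOrder.leadingTerm, m.degree_pow, m.leadingCoeff_pow,
    monomial_pow]

variable [IsReduced R]

theorem IsMonomialIdeal.leadingTerm_mem_igtIdeal (m : MonomialOrder σ) (hI : IsMonomialIdeal I)
    {f : MvPolynomial σ R} (hf : f ∈ igtIdeal I) : m.leadingTerm f ∈ igtIdeal I := by
  obtain ⟨k, hk, hfk⟩ := hf
  refine ⟨k, hk, ?_⟩
  rw [← m.leadingTerm_pow]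
  exact (hI.pow (k + 1)).monomial_coeff_mem hfk _

theorem IsMonomialIdeal.monomial_one_mem_igtIdeal (hI : IsMonomialIdeal I) {d : σ →₀ ℕ} {c : R}
    (hc : c ≠ 0) (h : monomial d c ∈ igtIdeal I) : monomial d (1 : R) ∈ igtIdeal I := by
  classical
  obtain ⟨k, hk, hmem⟩ := h
  refine ⟨k, hk, ?_⟩
  rw [monomial_pow] at hmem ⊢
  rw [one_pow]
  refine hI.pow (k + 1) _ hmem _ ?_
  rw [support_monomial, if_neg fun h => hc (IsReduced.eq_zero c ⟨k, h⟩)]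
  exact Finset.mem_singleton_self _

theorem isMonomialIdeal_igtIdeal (m : MonomialOrder σ) (hI : IsMonomialIdeal I) :
    IsMonomialIdeal (igtIdeal I) := fun _ hf d hd =>
  hI.monomial_one_mem_igtIdeal (mem_support_iff.1 hd) <|
    monomial_coeff_mem_of_forall_leadingTerm_mem m (fun _ => hI.leadingTerm_mem_igtIdeal m) hf d

end MvPolynomial

theorem igt_of_monomialIdeal_general {k : Type*} [Field k] {n : ℕ}
    (I : Ideal (MvPolynomial (Fin n) k))
    (hmono : ∃ S : Set (Fin n →₀ ℕ),
      I = Ideal.span ((fun d => MvPolynomial.monomial d (1 : k)) '' S)) :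
    (∃ T : Set (Fin n →₀ ℕ),
      {f : MvPolynomial (Fin n) k | MemIgt I f}
        = ↑(Ideal.span ((fun d => MvPolynomial.monomial d (1 : k)) '' T))) ∧
    (∀ f : MvPolynomial (Fin n) k, MemIgt I f ↔
      ∀ d ∈ f.support, MemIgt I (MvPolynomial.monomial d (MvPolynomial.coeff d f))) := by
  obtain ⟨S, rfl⟩ := hmono
  have hIgt := MvPolynomial.isMonomialIdeal_igtIdeal MonomialOrder.lex
    (MvPolynomial.isMonomialIdeal_span_monomial (R := k) S)
  simp only [memIgt_iff_mem_igtIdeal]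
  exact ⟨⟨_, congrArg SetLike.coe hIgt.eq_span⟩, fun f => hIgt.mem_iff⟩

/-- Lemma 4.3: let `k` be a field and `I` a nonzero monomial ideal of
`k[x_1,…,x_n]`.  Then `I_>` is a monomial ideal; equivalently, a polynomial `f` lies in
`I_>` iff every monomial occurring in `f` lies in `I_>`. -/
theorem igt_of_monomialIdeal {k : Type*} [Field k] {n : ℕ}
    (I : Ideal (MvPolynomial (Fin n) k)) (hI0 : I ≠ ⊥)
    (hmono : ∃ S : Set (Fin n →₀ ℕ),
      I = Ideal.span ((fun d => MvPolynomial.monomial d (1 : k)) '' S)) :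
    (∃ T : Set (Fin n →₀ ℕ),
      {f : MvPolynomial (Fin n) k | MemIgt I f}
        = ↑(Ideal.span ((fun d => MvPolynomial.monomial d (1 : k)) '' T))) ∧
    (∀ f : MvPolynomial (Fin n) k, MemIgt I f ↔
      ∀ d ∈ f.support, MemIgt I (MvPolynomial.monomial d (MvPolynomial.coeff d f))) :=
  igt_of_monomialIdeal_general I hmono
end

section
/- Let I be an ideal of a Noetherian ring A and let J be any reduction of I. Then I_> ⊆ *J. In particular, I_> is contained in the intersection of *J taken over all minimal reductions J of I. -/
open Filter Polynomial

/-!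
If `v̄_I(a) > 1` then `a^m ∈ I^(m+1)` for some `m > 0`, and raising this to powers shows that
`a^n ∈ I^(n+k)` for every fixed `k` once `n` is large. In a Noetherian ring a reduction `J` of
`I` has a reduction number, `I^(k+1) ⊆ J I^k`, which gives `I^(n+k) ⊆ J^n`: each generator `x`
of `I` satisfies `x^(d+1) ∈ J I^d` by its integral equation over `J`, and this property of
subideals of `I` is stable under sums. Hence `a^n ∈ J^n` for all large `n`, and such an `a` is
weakly subintegral over `J`, with coefficients `c_i a^i` for suitable integers `c_i`.
-/

section WeakSubintegral

/-- For `n > q` these integers solve the triangular system `∑_{j ≤ n} (n choose j) c_j = -1`;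
with `a_i := c_i b^i` it turns `b^n ∈ J^n` for `n > q` into weak subintegrality. -/
def wsubCoeff (q : ℕ) : ℕ → ℤ
  | n => if n ≤ q then 0 else
      -1 - ∑ j ∈ (Finset.range n).attach, (n.choose j : ℤ) * wsubCoeff q j
  decreasing_by exact Finset.mem_range.mp j.2

theorem wsubCoeff_of_le {q n : ℕ} (h : n ≤ q) : wsubCoeff q n = 0 := by
  rw [wsubCoeff, if_pos h]

theorem sum_choose_mul_wsubCoeff {q n : ℕ} (h : q < n) :
    ∑ j ∈ Finset.range (n + 1), (n.choose j : ℤ) * wsubCoeff q j = -1 := by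
  rw [Finset.sum_range_succ, Nat.choose_self, wsubCoeff, if_neg h.not_ge,
    Finset.sum_attach (Finset.range n) fun j => (n.choose j : ℤ) * wsubCoeff q j]
  ring

theorem wSubIdeal_of_forall_pow_mem_pow {A : Type*} [CommRing A] {J : Ideal A} {b : A} {q : ℕ}
    (h : ∀ n, q < n → b ^ n ∈ J ^ n) : WSubIdeal J b := by
  refine ⟨q, fun i => wsubCoeff q i * b ^ i, fun i => ?_, fun n hn _ => ?_⟩
  · rcases le_or_gt i q with hi | hi
    · simp [wsubCoeff_of_le hi]
    · exact (J ^ i).mul_mem_left _ (h i hi)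
  · have hterm : ∀ i ∈ Finset.range (n + 1),
        (n.choose i : A) * (wsubCoeff q i * b ^ i) * b ^ (n - i)
          = ((n.choose i * wsubCoeff q i : ℤ) : A) * b ^ n := by
      intro i hi
      rw [mul_assoc, mul_assoc, ← pow_add, Nat.add_sub_cancel' (Finset.mem_range_succ_iff.mp hi)]
      push_cast; ring
    have hIcc : Finset.Icc 1 n = (Finset.range (n + 1)).erase 0 := by
      ext i
      simp only [Finset.mem_Icc, Finset.mem_erase, Finset.mem_range]
      omega
    rw [hIcc, Finset.sum_erase _ (by simp [wsubCoeff_of_le (Nat.zero_le q)]),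
      Finset.sum_congr rfl hterm, ← Finset.sum_mul, ← Int.cast_sum,
      sum_choose_mul_wsubCoeff (by omega)]
    push_cast; ring

end WeakSubintegral

section SamuelFunction

variable {A : Type*} [CommRing A] {I : Ideal A}

theorem mem_pow_of_lt_ordI {x : A} {m : ℕ} (h : (m : ℕ∞) < ordI I x) : x ∈ I ^ (m + 1) := by
  obtain ⟨n, hn, hmn⟩ := (lt_biSup_iff (f := fun n : ℕ => (n : ℕ∞))).mp h
  exact Ideal.pow_le_pow_right (by exact_mod_cast hmn) hn

theorem MemIgt.exists_pow_mem_pow_succ {a : A} (h : MemIgt I a) :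
    ∃ n, 0 < n ∧ a ^ n ∈ I ^ (n + 1) := by
  obtain ⟨L, hL, hT⟩ := h
  obtain ⟨n, hn, hpos⟩ :=
    ((hT.eventually (Ioi_mem_nhds hL)).and (Filter.eventually_gt_atTop 0)).exists
  refine ⟨n, hpos, mem_pow_of_lt_ordI ?_⟩
  have : (n : ENNReal) < ordI I (a ^ n) := by
    simpa using (ENNReal.lt_div_iff_mul_lt (by simp [hpos.ne']) (by simp)).mp hn
  exact_mod_cast this

theorem exists_forall_pow_mem_pow_add {a : A} {n₀ : ℕ} (hn₀ : 0 < n₀)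
    (h : a ^ n₀ ∈ I ^ (n₀ + 1)) (K : ℕ) : ∃ N, ∀ n ≥ N, a ^ n ∈ I ^ (n + K) := by
  refine ⟨n₀ * (n₀ + K), fun n hn => ?_⟩
  have hdiv : n₀ + K ≤ n / n₀ := (Nat.le_div_iff_mul_le hn₀).mpr (by linarith)
  have hmod : n % n₀ < n₀ := Nat.mod_lt _ hn₀
  have hmem : a ^ n ∈ I ^ ((n₀ + 1) * (n / n₀)) := by
    have hfac : a ^ n = (a ^ n₀) ^ (n / n₀) * a ^ (n % n₀) := by
      rw [← pow_mul, ← pow_add, Nat.div_add_mod]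
    rw [hfac, pow_mul]
    exact Ideal.mul_mem_right _ _ (Ideal.pow_mem_pow h _)
  refine Ideal.pow_le_pow_right ?_ hmem
  nlinarith [Nat.div_add_mod n n₀]

end SamuelFunction

section ReductionNumber

variable {A : Type*} [CommRing A] {I J K : Ideal A}

theorem IntegralOverIdeal.exists_pow_succ_mem_mul_pow (hJI : J ≤ I) {x : A} (hx : x ∈ I)
    (h : IntegralOverIdeal J x) : ∃ k, x ^ (k + 1) ∈ J * I ^ k := by
  obtain ⟨n, hn, c, hc, heq⟩ := h
  obtain ⟨k, rfl⟩ : ∃ k, n = k + 1 := ⟨n - 1, by omega⟩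
  refine ⟨k, ?_⟩
  rw [eq_neg_of_add_eq_zero_left heq]
  refine neg_mem (Ideal.sum_mem _ fun i hi => ?_)
  obtain ⟨j, rfl⟩ := Nat.exists_eq_add_of_le' (Finset.mem_Icc.mp hi).1
  have hj : j + 1 ≤ k + 1 := (Finset.mem_Icc.mp hi).2
  have hc' : c (j + 1) ∈ J * I ^ j := by
    have := hc (j + 1)
    rw [pow_succ'] at this
    exact Ideal.mul_mono_right (Ideal.pow_right_mono hJI j) this
  have := Ideal.mul_mem_mul hc' (Ideal.pow_mem_pow hx (k + 1 - (j + 1)))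
  rwa [mul_assoc, ← pow_add, show j + (k + 1 - (j + 1)) = k by omega] at this

theorem pow_succ_le_mul_pow_of_le (hKI : K ≤ I) {a m : ℕ} (h : K ^ (a + 1) ≤ J * I ^ a)
    (ham : a ≤ m) : K ^ (m + 1) ≤ J * I ^ m :=
  calc K ^ (m + 1) = K ^ (a + 1) * K ^ (m - a) := by rw [← pow_add]; congr 1; omega
    _ ≤ J * I ^ a * I ^ (m - a) := Ideal.mul_mono h (Ideal.pow_right_mono hKI _)
    _ = J * I ^ m := by rw [mul_assoc, ← pow_add, Nat.add_sub_cancel' ham]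

theorem sup_pow_succ_le_mul_pow {K₁ K₂ : Ideal A} (h₁I : K₁ ≤ I) (h₂I : K₂ ≤ I) {a b : ℕ}
    (h₁ : K₁ ^ (a + 1) ≤ J * I ^ a) (h₂ : K₂ ^ (b + 1) ≤ J * I ^ b) :
    (K₁ ⊔ K₂) ^ (a + b + 1) ≤ J * I ^ (a + b) := by
  rw [← Ideal.add_eq_sup, add_pow, Ideal.sum_eq_sup]
  refine Finset.sup_le fun i hi => Ideal.mul_le_left.trans ?_
  have hi : i ≤ a + b + 1 := Finset.mem_range_succ_iff.mp hi
  rcases le_or_gt (a + 1) i with hai | hia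
  · obtain ⟨m, rfl⟩ : ∃ m, i = m + 1 := ⟨i - 1, by omega⟩
    calc K₁ ^ (m + 1) * K₂ ^ (a + b + 1 - (m + 1))
        ≤ J * I ^ m * I ^ (a + b + 1 - (m + 1)) :=
          Ideal.mul_mono (pow_succ_le_mul_pow_of_le h₁I h₁ (by omega)) (Ideal.pow_right_mono h₂I _)
      _ = J * I ^ (a + b) := by rw [mul_assoc, ← pow_add]; congr 2; omega
  · obtain ⟨m, hm⟩ : ∃ m, a + b + 1 - i = m + 1 := ⟨a + b - i, by omega⟩
    calc K₁ ^ i * K₂ ^ (a + b + 1 - i)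
        ≤ I ^ i * (J * I ^ m) :=
          Ideal.mul_mono (Ideal.pow_right_mono h₁I _)
            (hm ▸ pow_succ_le_mul_pow_of_le h₂I h₂ (by omega))
      _ = J * I ^ (a + b) := by rw [mul_left_comm, ← pow_add]; congr 2; omega

theorem exists_pow_succ_le_mul_pow_of_fg (hK : K.FG) (hKI : K ≤ I)
    (h : ∀ x ∈ K, ∃ k, x ^ (k + 1) ∈ J * I ^ k) : ∃ k, K ^ (k + 1) ≤ J * I ^ k := by
  induction K, hK using Submodule.fg_induction with
  | singleton x =>
    obtain ⟨k, hk⟩ := h x (Submodule.mem_span_singleton_self x)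
    refine ⟨k, ?_⟩
    rwa [← Ideal.span, Ideal.span_singleton_pow, Ideal.span_singleton_le_iff_mem]
  | sup K₁ K₂ _ _ ih₁ ih₂ =>
    obtain ⟨a, ha⟩ := ih₁ (le_sup_left.trans hKI) fun x hx => h x (Ideal.mem_sup_left hx)
    obtain ⟨b, hb⟩ := ih₂ (le_sup_right.trans hKI) fun x hx => h x (Ideal.mem_sup_right hx)
    exact ⟨a + b, sup_pow_succ_le_mul_pow (le_sup_left.trans hKI) (le_sup_right.trans hKI) ha hb⟩

theorem IsReduction.exists_pow_succ_le_mul_pow [IsNoetherianRing A] (h : IsReduction J I) :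
    ∃ k, I ^ (k + 1) ≤ J * I ^ k := by
  refine exists_pow_succ_le_mul_pow_of_fg (IsNoetherian.noetherian I) le_rfl fun x hx => ?_
  refine IntegralOverIdeal.exists_pow_succ_mem_mul_pow h.1 hx ((h.2 x).mpr ?_)
  refine ⟨1, one_pos, fun i => if i = 1 then -x else 0, fun i => ?_, by simp⟩
  rcases eq_or_ne i 1 with rfl | hi <;> simp [*]

theorem pow_add_le_pow_of_pow_succ_le_mul_pow {k : ℕ} (h : I ^ (k + 1) ≤ J * I ^ k) (n : ℕ) :
    I ^ (n + k) ≤ J ^ n := by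
  suffices I ^ (n + k) ≤ J ^ n * I ^ k from this.trans Ideal.mul_le_left
  induction n with
  | zero => simp
  | succ n ih =>
    calc I ^ (n + 1 + k) = I ^ n * I ^ (k + 1) := by rw [← pow_add]; congr 1; omega
      _ ≤ I ^ n * (J * I ^ k) := Ideal.mul_mono_right h
      _ = J * I ^ (n + k) := by rw [mul_left_comm, ← pow_add]
      _ ≤ J * (J ^ n * I ^ k) := Ideal.mul_mono_right ih
      _ = J ^ (n + 1) * I ^ k := by rw [← mul_assoc, pow_succ']

end ReductionNumber

/-- Corollary 4.7: for an ideal `I` of a Noetherian ring `A` and any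
reduction `J` of `I`, one has `I_> ⊆ *J`; in particular `I_>` is contained in the
intersection of `*J` over all minimal reductions `J` of `I`. -/
theorem igt_subset_weakSubintegralClosure_of_reduction {A : Type*} [CommRing A]
    [IsNoetherianRing A] (I : Ideal A) :
    (∀ J : Ideal A, IsReduction J I → ∀ a : A, MemIgt I a → WSubIdeal J a) ∧
    (∀ a : A, MemIgt I a → ∀ J : Ideal A, IsMinimalReduction J I → WSubIdeal J a) := by
  have igt_subset : ∀ J : Ideal A, IsReduction J I → ∀ a : A, MemIgt I a → WSubIdeal J a := by
    intro J hJ a ha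
    obtain ⟨k, hk⟩ := hJ.exists_pow_succ_le_mul_pow
    obtain ⟨m, hm, ham⟩ := ha.exists_pow_mem_pow_succ
    obtain ⟨N, hN⟩ := exists_forall_pow_mem_pow_add hm ham k
    exact wSubIdeal_of_forall_pow_mem_pow (q := N) fun n hn =>
      pow_add_le_pow_of_pow_succ_le_mul_pow hk n (hN n hn.le)
  exact ⟨igt_subset, fun a ha J hJ => igt_subset J hJ.1 a ha⟩
end
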